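/- arXiv:1707.05893 — 4 statements merged into one kernel-verified Lean document; each statement's English description precedes it below -/
import Mathlib

section
/- A partition λ = (α_1+1, …, α_p+1 | α_1, …, α_p) in Frobenius notation (with α_1 > ⋯ > α_p ≥ 0) is an even partition (all parts even) if and only if either: p is even, α_1, α_3, …, α_{p−1} are even, and α_{2i−1} − α_{2i} = 1 for all i = 1,…,p/2; or: p is odd, α_1, α_3, …, α_{p−2} are even, α_p = 0, and α_{2i−1} − α_{2i} = 1 for i = 1,…,(p−1)/2. -/
/-!
Row `i` of a Young diagram has length `j + 1` exactly when `colLen (j + 1) ≤ i < colLen j`.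
Hence, if the column just right of the Durfee square has length `p`, the rows below the square
are all even iff the columns `2k, 2k + 1 ≤ p` have equal lengths. For `λ = (α + 1 | α)` these
lengths are `α_j + j + 1`, so this says `α_{2k} = α_{2k+1} + 1` for `2k + 1 < p`, and, for odd
`p`, `α_{p-1} = 0`. The rows inside the square have length `α_i + i + 2`; under the pairing
`α_{2k+1} + (2k + 1) = α_{2k} + 2k`, so their parity is that of the `α_i` with `i` even.
-/

namespace YoungDiagram

variable (μ : YoungDiagram)

theorem rowLen_eq_succ_iff {i j : ℕ} :
    μ.rowLen i = j + 1 ↔ μ.colLen (j + 1) ≤ i ∧ i < μ.colLen j := by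
  rw [← not_lt, ← mem_iff_lt_colLen, ← mem_iff_lt_colLen, mem_iff_lt_rowLen, mem_iff_lt_rowLen]
  omega

theorem colLen_eq_succ_of_mem_of_notMem {i j : ℕ} (hmem : (i, j) ∈ μ) (hnot : (i + 1, j) ∉ μ) :
    μ.colLen j = i + 1 := by
  rw [mem_iff_lt_colLen] at hmem hnot
  omega

theorem rowLen_le_of_colLen_eq {p i : ℕ} (hcp : μ.colLen p = p) (hi : p ≤ i) :
    μ.rowLen i ≤ p := by
  by_contra! h
  have := mem_iff_lt_colLen.1 (mem_iff_lt_rowLen.2 h)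
  omega

theorem forall_even_rowLen_ge_iff {p : ℕ} (hcp : μ.colLen p = p) :
    (∀ i, p ≤ i → Even (μ.rowLen i)) ↔
      ∀ k, 2 * k + 1 ≤ p → μ.colLen (2 * k) = μ.colLen (2 * k + 1) := by
  constructor
  · intro h k hk
    by_contra hne
    have hlt : μ.colLen (2 * k + 1) < μ.colLen (2 * k) :=
      lt_of_le_of_ne (μ.colLen_anti _ _ (by omega)) (Ne.symm hne)
    have hp : p ≤ μ.colLen (2 * k + 1) := hcp ▸ μ.colLen_anti _ _ hk
    have hlen := (μ.rowLen_eq_succ_iff (i := μ.colLen (2 * k + 1))).2 ⟨le_rfl, hlt⟩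
    exact Nat.not_even_two_mul_add_one k (hlen ▸ h _ hp)
  · intro h i hi
    by_contra hodd
    obtain ⟨k, hk⟩ := Nat.not_even_iff_odd.1 hodd
    have hkp : 2 * k + 1 ≤ p := hk ▸ μ.rowLen_le_of_colLen_eq hcp hi
    obtain ⟨hle, hlt⟩ := μ.rowLen_eq_succ_iff.1 hk
    exact (hle.trans_lt hlt).ne' (h k hkp)

end YoungDiagram

section FrobeniusParity

variable {p : ℕ} (α : Fin p → ℕ)

theorem forall_even_add_iff_of_pairing
    (hpair : ∀ j : ℕ, ∀ h : 2 * j + 1 < p,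
      α ⟨2 * j, Nat.lt_of_succ_lt h⟩ = α ⟨2 * j + 1, h⟩ + 1) :
    (∀ i : Fin p, Even (α i + i)) ↔ ∀ i : Fin p, Even (i : ℕ) → Even (α i) := by
  refine ⟨fun h i hi => (Nat.even_add.1 (h i)).2 hi, fun h i => ?_⟩
  obtain ⟨i, hip⟩ := i
  rcases Nat.even_or_odd i with hi | ⟨j, rfl⟩
  · exact Nat.even_add.2 (iff_of_true (h _ hi) hi)
  · have hsum : α ⟨2 * j + 1, hip⟩ + (2 * j + 1) = α ⟨2 * j, by omega⟩ + 2 * j := by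
      rw [hpair j hip]; ring
    rw [hsum]
    exact Nat.even_add.2 (iff_of_true (h _ (even_two_mul j)) (even_two_mul j))

theorem forall_even_iff_of_last_eq_zero (hp : 1 ≤ p)
    (hlast : α ⟨p - 1, Nat.sub_lt hp Nat.one_pos⟩ = 0) :
    (∀ i : Fin p, Even (i : ℕ) → Even (α i)) ↔
      ∀ i : Fin p, Even (i : ℕ) → (i : ℕ) + 1 < p → Even (α i) := by
  refine ⟨fun h i hi _ => h i hi, fun h i hi => ?_⟩
  rcases Nat.lt_or_ge ((i : ℕ) + 1) p with hlt | hge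
  · exact h i hi hlt
  · have hi_last : i = ⟨p - 1, by omega⟩ := Fin.ext (by simp; omega)
    rw [hi_last, hlast]
    exact Even.zero

theorem frobenius_conditions_iff (hp : 1 ≤ p) :
    ((∀ i : Fin p, Even (α i + i)) ∧
      (∀ j : ℕ, ∀ h : 2 * j + 1 < p, α ⟨2 * j, Nat.lt_of_succ_lt h⟩ = α ⟨2 * j + 1, h⟩ + 1) ∧
      (Odd p → α ⟨p - 1, Nat.sub_lt hp Nat.one_pos⟩ = 0)) ↔
    ((Even p ∧ (∀ i : Fin p, Even (i : ℕ) → Even (α i)) ∧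
        (∀ j : ℕ, ∀ h : 2 * j + 1 < p, α ⟨2 * j, Nat.lt_of_succ_lt h⟩ = α ⟨2 * j + 1, h⟩ + 1)) ∨
      (Odd p ∧ (∀ i : Fin p, Even (i : ℕ) → (i : ℕ) + 1 < p → Even (α i)) ∧
        α ⟨p - 1, Nat.sub_lt hp Nat.one_pos⟩ = 0 ∧
        (∀ j : ℕ, ∀ h : 2 * j + 1 < p,
          α ⟨2 * j, Nat.lt_of_succ_lt h⟩ = α ⟨2 * j + 1, h⟩ + 1))) := by
  constructor
  · rintro ⟨hA, hpair, hodd⟩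
    rw [forall_even_add_iff_of_pairing α hpair] at hA
    rcases Nat.even_or_odd p with he | ho
    · exact Or.inl ⟨he, hA, hpair⟩
    · exact Or.inr ⟨ho, (forall_even_iff_of_last_eq_zero α hp (hodd ho)).1 hA, hodd ho, hpair⟩
  · rintro (⟨he, hA, hpair⟩ | ⟨ho, hA, hlast, hpair⟩)
    · exact ⟨(forall_even_add_iff_of_pairing α hpair).2 hA, hpair,
        fun ho => absurd he (Nat.not_even_iff_odd.2 ho)⟩
    · exact ⟨(forall_even_add_iff_of_pairing α hpair).2
        ((forall_even_iff_of_last_eq_zero α hp hlast).2 hA), hpair, fun _ => hlast⟩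

variable (μ : YoungDiagram)

theorem forall_even_rowLen_iff_of_rowLen (hrow : ∀ i : Fin p, μ.rowLen i = α i + i + 2) :
    (∀ i, Even (μ.rowLen i)) ↔
      (∀ i : Fin p, Even (α i + i)) ∧ ∀ i, p ≤ i → Even (μ.rowLen i) := by
  have hin : ∀ i : Fin p, Even (μ.rowLen i) ↔ Even (α i + i) := fun i => by
    rw [hrow i, Nat.even_add, iff_true_right even_two]
  simp only [← hin]
  refine ⟨fun h => ⟨fun i => h i, fun i _ => h i⟩, fun ⟨hinside, hout⟩ i => ?_⟩
  rcases lt_or_ge i p with hi | hi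
  · exact hinside ⟨i, hi⟩
  · exact hout i hi

theorem colLen_pairs_iff_of_colLen (hp : 1 ≤ p) (hcp : μ.colLen p = p)
    (hcol : ∀ i : Fin p, μ.colLen i = α i + i + 1) :
    (∀ k, 2 * k + 1 ≤ p → μ.colLen (2 * k) = μ.colLen (2 * k + 1)) ↔
      (∀ j : ℕ, ∀ h : 2 * j + 1 < p, α ⟨2 * j, Nat.lt_of_succ_lt h⟩ = α ⟨2 * j + 1, h⟩ + 1) ∧
        (Odd p → α ⟨p - 1, Nat.sub_lt hp Nat.one_pos⟩ = 0) := by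
  have hcol' : ∀ i (hi : i < p), μ.colLen i = α ⟨i, hi⟩ + i + 1 := fun i hi => hcol ⟨i, hi⟩
  have hlast : α ⟨p - 1, Nat.sub_lt hp Nat.one_pos⟩ = 0 ↔ μ.colLen (p - 1) = μ.colLen p := by
    rw [hcol' (p - 1) (by omega), hcp]
    omega
  constructor
  · intro h
    refine ⟨fun j hj => ?_, fun ⟨k, hk⟩ => ?_⟩
    · have := h j hj.le
      rw [hcol' _ (by omega), hcol' _ hj] at this
      omega
    · rw [hlast, show p - 1 = 2 * k by omega, hk]
      exact h k hk.ge
  · rintro ⟨hpair, hodd⟩ k hk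
    rcases hk.lt_or_eq with hlt | rfl
    · rw [hcol' _ (by omega), hcol' _ hlt, hpair k hlt]
      ring
    · have := hlast.1 (hodd (odd_two_mul_add_one k))
      rwa [show 2 * k + 1 - 1 = 2 * k by omega] at this

end FrobeniusParity

/-- a partition `λ = (α₁+1, …, α_p+1 | α₁, …, α_p)` in Frobenius notation
(realized as a Young diagram `μ` with Durfee square of size `p`, 0-based row lengths
`α i + i + 2` and column lengths `α i + i + 1` on the Durfee square) is even (all parts
even) if and only if either `p` is even, `α₁, α₃, …, α_{p−1}` (0-based: the `α` at even
indices) are even and consecutive pairs differ by `1`; or `p` is odd, those `α`'s are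
even, `α_p = 0`, and the first `(p−1)/2` consecutive pairs differ by `1`. -/
theorem frobenius_arm_plus_one_even_iff (p : ℕ) (hp : 1 ≤ p) (α : Fin p → ℕ)
    (μ : YoungDiagram)
    (hdur : (p, p) ∉ μ)
    (hrow : ∀ i : Fin p, μ.rowLen i = α i + i + 2)
    (hcol : ∀ i : Fin p, μ.colLen i = α i + i + 1) :
    (∀ i : ℕ, Even (μ.rowLen i)) ↔
      ((Even p ∧ (∀ i : Fin p, Even (i : ℕ) → Even (α i)) ∧
        (∀ j : ℕ, ∀ h : 2 * j + 1 < p, α ⟨2 * j, by omega⟩ = α ⟨2 * j + 1, h⟩ + 1)) ∨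
       (Odd p ∧ (∀ i : Fin p, Even (i : ℕ) → (i : ℕ) + 1 < p → Even (α i)) ∧
        α ⟨p - 1, by omega⟩ = 0 ∧
        (∀ j : ℕ, ∀ h : 2 * j + 1 < p, α ⟨2 * j, by omega⟩ = α ⟨2 * j + 1, h⟩ + 1))) := by
  have hcp : μ.colLen p = p := by
    have hmem : (p - 1, p) ∈ μ := by
      rw [YoungDiagram.mem_iff_lt_rowLen, hrow ⟨p - 1, by omega⟩, Fin.val_mk]
      omega
    have := μ.colLen_eq_succ_of_mem_of_notMem hmem (by rwa [Nat.sub_add_cancel hp])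
    omega
  rw [forall_even_rowLen_iff_of_rowLen α μ hrow, μ.forall_even_rowLen_ge_iff hcp,
    colLen_pairs_iff_of_colLen α μ hp hcp hcol]
  exact frobenius_conditions_iff α hp
end

section
/- For every k ≥ 1, the polynomial identity holds: Σ over even p with 2 ≤ p ≤ 2k, of t^{p(p+1)/2} · Σ_{a_1+⋯+a_{p/2} ≤ 2k−p, all a_i even} t^{2a_1+4a_2+⋯+p·a_{p/2}}, plus 1, equals Π_{j=1}^k (1 + t^{4j−1}). -/
/-!
Write `x = t⁴`. Since `4(j+1) - 1 = 3 + 4j`, expanding the product gives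
`∏_{j<k} (1 + t³ xʲ) = Σ_Q t^{3Q} Σ_{S ⊆ {0,…,k-1}, |S| = Q} x^{ΣS}`.
On the left, halving the even entries `aᵢ = 2bᵢ` turns the summand `p = 2Q` into
`t^{3Q} x^{Q(Q-1)/2} Σ_{Σ bᵢ ≤ k-Q} x^{Σ (i+1) bᵢ}`, using `Q(2Q+1) = 3Q + 2Q(Q-1)`.
Both `x^{Q(Q-1)/2} Σ_{Σ bᵢ ≤ k-Q} x^{Σ (i+1) bᵢ}` and `Σ_S x^{ΣS}` equal `x^{Q(Q-1)/2}` times the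
Gaussian binomial `[k, Q]_x`: splitting off the first coordinate of `b`, resp. the largest
element of `S`, gives the same recursion in `Q`.
-/

open Finset Polynomial

namespace Finset.Nat

theorem sum_antidiagonalTuple_succ {M : Type*} [AddCommMonoid M] (q m : ℕ)
    (f : (Fin (q + 1) → ℕ) → M) :
    ∑ b ∈ antidiagonalTuple (q + 1) m, f b =
      ∑ j ∈ range (m + 1), ∑ b ∈ antidiagonalTuple q j, f (Fin.cons (m - j) b) := by
  rw [sum_sigma']
  refine sum_nbij' (fun b => ⟨∑ i, Fin.tail b i, Fin.tail b⟩)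
    (fun b => Fin.cons (m - b.1) b.2) ?_ ?_ ?_ ?_ ?_
  all_goals simp only [mem_sigma, mem_range, mem_antidiagonalTuple, Fin.sum_univ_succ,
    Fin.cons_zero, Fin.cons_succ, Fin.tail, Sigma.forall, and_true]
  · intro b hb; omega
  · intro j b hb; omega
  · intro b hb
    rw [← hb, Nat.add_sub_cancel]
    exact Fin.cons_self_tail b
  · rintro j b ⟨-, rfl⟩; rfl
  · intro b hb
    rw [← hb, Nat.add_sub_cancel]
    exact congrArg f (Fin.cons_self_tail b).symm

theorem filter_even_antidiagonalTuple_two_mul (q m : ℕ) :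
    (antidiagonalTuple q (2 * m)).filter (fun a => ∀ i, Even (a i)) =
      (antidiagonalTuple q m).image (2 • ·) := by
  ext a
  simp only [mem_filter, mem_image, mem_antidiagonalTuple]
  constructor
  · rintro ⟨hsum, heven⟩
    refine ⟨fun i => a i / 2, ?_, funext fun i => Nat.two_mul_div_two_of_even (heven i)⟩
    have : 2 * ∑ i, a i / 2 = 2 * m := by
      rw [mul_sum, ← hsum]
      exact sum_congr rfl fun i _ => Nat.two_mul_div_two_of_even (heven i)
    exact Nat.eq_of_mul_eq_mul_left two_pos this
  · rintro ⟨b, hb, rfl⟩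
    simp only [Pi.smul_apply, smul_eq_mul, ← mul_sum, hb, true_and]
    exact fun i => even_two_mul (b i)

theorem filter_even_antidiagonalTuple_of_odd {q m : ℕ} (hm : Odd m) :
    (antidiagonalTuple q m).filter (fun a => ∀ i, Even (a i)) = ∅ := by
  refine filter_false_of_mem fun a ha heven => Nat.not_even_iff_odd.mpr hm ?_
  rw [← mem_antidiagonalTuple.mp ha]
  exact even_sum _ fun i _ => heven i

theorem sum_range_sum_filter_even_antidiagonalTuple {M : Type*} [AddCommMonoid M] (q n : ℕ)
    (f : (Fin q → ℕ) → M) :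
    ∑ m ∈ range (2 * n + 1),
        ∑ a ∈ (antidiagonalTuple q m).filter (fun a => ∀ i, Even (a i)), f a =
      ∑ m ∈ range (n + 1), ∑ b ∈ antidiagonalTuple q m, f (2 • b) := by
  have hdouble (m : ℕ) :
      ∑ a ∈ (antidiagonalTuple q (2 * m)).filter (fun a => ∀ i, Even (a i)), f a =
        ∑ b ∈ antidiagonalTuple q m, f (2 • b) := by
    rw [filter_even_antidiagonalTuple_two_mul, sum_image (smul_right_injective _ two_ne_zero).injOn]
  induction n with
  | zero => simpa using hdouble 0
  | succ n ih =>
    rw [show 2 * (n + 1) + 1 = 2 * n + 1 + 1 + 1 by ring, sum_range_succ, sum_range_succ, ih,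
      filter_even_antidiagonalTuple_of_odd (odd_two_mul_add_one n), sum_empty, add_zero,
      show 2 * n + 1 + 1 = 2 * (n + 1) by ring, hdouble, sum_range_succ _ (n + 1)]

end Finset.Nat

open Finset.Nat

def tupleWeight {q : ℕ} (b : Fin q → ℕ) : ℕ := ∑ i : Fin q, ((i : ℕ) + 1) * b i

theorem tupleWeight_cons {q : ℕ} (c : ℕ) (b : Fin q → ℕ) :
    tupleWeight (Fin.cons c b : Fin (q + 1) → ℕ) = c + ∑ i, b i + tupleWeight b := by
  simp only [tupleWeight, Fin.sum_univ_succ, Fin.cons_zero, Fin.cons_succ, Fin.val_zero,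
    Fin.val_succ, add_mul, one_mul, sum_add_distrib]
  ring

section GaussianBinomial

variable {R : Type*} [CommSemiring R] (x : R)

def boundedTupleGF (q n : ℕ) : R :=
  ∑ m ∈ range (n + 1), ∑ b ∈ antidiagonalTuple q m, x ^ tupleWeight b

def subsetGF (q N : ℕ) : R :=
  ∑ S ∈ powersetCard q (range N), x ^ ∑ j ∈ S, j

theorem boundedTupleGF_zero_left (n : ℕ) : boundedTupleGF x 0 n = 1 := by
  rw [boundedTupleGF, sum_range_succ']
  simp [tupleWeight]

theorem boundedTupleGF_succ_left (q n : ℕ) :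
    boundedTupleGF x (q + 1) n = ∑ m ∈ range (n + 1), x ^ m * boundedTupleGF x q m := by
  refine sum_congr rfl fun m _ => ?_
  rw [sum_antidiagonalTuple_succ, boundedTupleGF, mul_sum]
  refine sum_congr rfl fun j hj => ?_
  rw [mul_sum]
  refine sum_congr rfl fun b hb => ?_
  rw [mem_antidiagonalTuple] at hb
  rw [mem_range] at hj
  rw [tupleWeight_cons, hb, Nat.sub_add_cancel (by omega), pow_add]

theorem subsetGF_zero_left (N : ℕ) : subsetGF x 0 N = 1 := by
  simp [subsetGF]

theorem subsetGF_of_lt {q N : ℕ} (h : N < q) : subsetGF x q N = 0 := by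
  rw [subsetGF, powersetCard_eq_empty.mpr (by simpa using h), sum_empty]

theorem subsetGF_succ_succ (q N : ℕ) :
    subsetGF x (q + 1) (N + 1) = subsetGF x (q + 1) N + x ^ N * subsetGF x q N := by
  have hN : N ∉ range N := notMem_range_self
  rw [subsetGF, range_add_one, powersetCard_succ_insert hN, sum_union, sum_image, subsetGF,
    subsetGF, mul_sum]
  · refine congrArg _ (sum_congr rfl fun S hS => ?_)
    rw [sum_insert (fun h => hN ((mem_powersetCard.mp hS).1 h)), pow_add]
  · intro S hS T hT h
    have hNS : N ∉ S := fun h => hN ((mem_powersetCard.mp hS).1 h)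
    have hNT : N ∉ T := fun h => hN ((mem_powersetCard.mp hT).1 h)
    rw [← erase_insert hNS, ← erase_insert hNT, h]
  · refine disjoint_left.mpr fun S hS hS' => ?_
    obtain ⟨T, -, rfl⟩ := mem_image.mp hS'
    exact hN ((mem_powersetCard.mp hS).1 (mem_insert_self N T))

theorem subsetGF_succ_left (q N : ℕ) :
    subsetGF x (q + 1) N = ∑ m ∈ range N, x ^ m * subsetGF x q m := by
  induction N with
  | zero => rw [subsetGF_of_lt x (Nat.succ_pos q), sum_range_zero]
  | succ N ih => rw [subsetGF_succ_succ, ih, sum_range_succ]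

theorem pow_mul_boundedTupleGF (q n : ℕ) :
    x ^ (∑ j ∈ range q, j) * boundedTupleGF x q n = subsetGF x q (n + q) := by
  induction q generalizing n with
  | zero => rw [boundedTupleGF_zero_left, subsetGF_zero_left, sum_range_zero, pow_zero, mul_one]
  | succ q ih =>
    have hvanish : ∑ m ∈ range q, x ^ m * subsetGF x q m = 0 :=
      sum_eq_zero fun m hm => by rw [subsetGF_of_lt x (mem_range.mp hm), mul_zero]
    rw [boundedTupleGF_succ_left, subsetGF_succ_left, show n + (q + 1) = q + (n + 1) by ring,
      sum_range_add _ q (n + 1), hvanish, zero_add, mul_sum]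
    refine sum_congr rfl fun m _ => ?_
    rw [add_comm q m, ← ih, sum_range_succ]
    ring

theorem prod_one_add_mul_pow (y : R) (k : ℕ) :
    ∏ j ∈ range k, (1 + y * x ^ j) = ∑ q ∈ range (k + 1), y ^ q * subsetGF x q k := by
  rw [prod_one_add, sum_powerset, card_range]
  refine sum_congr rfl fun q _ => ?_
  rw [subsetGF, mul_sum]
  refine sum_congr rfl fun S hS => ?_
  rw [prod_mul_distrib, prod_const, prod_pow_eq_pow_sum, (mem_powersetCard.mp hS).2]

theorem summand_eq_pow_mul_subsetGF {k Q : ℕ} (hQ : Q ≤ k) :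
    x ^ (2 * Q * (2 * Q + 1) / 2) *
        ∑ m ∈ range (2 * k - 2 * Q + 1),
          ∑ a ∈ (antidiagonalTuple (2 * Q / 2) m).filter (fun a => ∀ i, Even (a i)),
            x ^ (∑ i : Fin (2 * Q / 2), 2 * ((i : ℕ) + 1) * a i) =
      (x ^ 3) ^ Q * subsetGF (x ^ 4) Q k := by
  have hexp : 2 * Q * (2 * Q + 1) / 2 = 3 * Q + 4 * ∑ j ∈ range Q, j := by
    have htriangle := sum_range_id_mul_two Q
    rw [mul_assoc, Nat.mul_div_cancel_left _ two_pos]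
    cases Q with
    | zero => simp
    | succ Q => rw [Nat.add_sub_cancel] at htriangle; nlinarith
  have hweight (b : Fin Q → ℕ) :
      ∑ i : Fin Q, 2 * ((i : ℕ) + 1) * (2 • b) i = 4 * tupleWeight b := by
    rw [tupleWeight, mul_sum]
    exact sum_congr rfl fun i _ => by rw [Pi.smul_apply, smul_eq_mul]; ring
  rw [Nat.mul_div_cancel_left Q two_pos, hexp, show 2 * k - 2 * Q = 2 * (k - Q) by omega,
    sum_range_sum_filter_even_antidiagonalTuple]
  simp only [hweight, pow_mul]
  have hgauss := pow_mul_boundedTupleGF (x ^ 4) Q (k - Q)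
  rw [Nat.sub_add_cancel hQ] at hgauss
  rw [← hgauss, pow_add, pow_mul x 3, pow_mul x 4, mul_assoc, boundedTupleGF]

end GaussianBinomial

theorem sp_exterior_symmetric_square_hilbert_general (k : ℕ) :
    (1 : Polynomial ℚ) +
      ∑ p ∈ (Finset.range (2 * k + 1)).filter (fun p => 2 ≤ p ∧ Even p),
        X ^ (p * (p + 1) / 2) *
          ∑ m ∈ Finset.range (2 * k - p + 1),
            ∑ a ∈ (Finset.Nat.antidiagonalTuple (p / 2) m).filter
                (fun a => ∀ i, Even (a i)),
              X ^ (∑ i : Fin (p / 2), 2 * ((i : ℕ) + 1) * a i) =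
    ∏ j ∈ Finset.range k, (1 + X ^ (4 * (j + 1) - 1)) := by
  have hevens : (range (2 * k + 1)).filter (fun p => 2 ≤ p ∧ Even p) =
      (range k).image fun q => 2 * (q + 1) := by
    ext p
    simp only [mem_filter, mem_range, mem_image, Nat.even_iff]
    constructor
    · rintro ⟨hp, hp2, hpeven⟩
      exact ⟨p / 2 - 1, by omega, by omega⟩
    · rintro ⟨q, hq, rfl⟩
      omega
  have hfactor (j : ℕ) : 1 + (X : ℚ[X]) ^ (4 * (j + 1) - 1) = 1 + X ^ 3 * (X ^ 4) ^ j := by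
    rw [← pow_mul, ← pow_add]
    congr 2
    omega
  rw [hevens, sum_image fun _ _ _ _ h => by simpa using h, prod_congr rfl fun j _ => hfactor j,
    prod_one_add_mul_pow, sum_range_succ', pow_zero, subsetGF_zero_left, one_mul, add_comm]
  exact congrArg (· + 1)
    (sum_congr rfl fun q hq => summand_eq_pow_mul_subsetGF X (mem_range.mp hq))

/-- for every `k ≥ 1`,
`1 + Σ_{p even, 2 ≤ p ≤ 2k} t^{p(p+1)/2} Σ_{a₁+⋯+a_{p/2} ≤ 2k−p, aᵢ even} t^{2a₁+4a₂+⋯+p·a_{p/2}}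
  = Π_{j=1}^k (1 + t^{4j−1})`. -/
theorem sp_exterior_symmetric_square_hilbert (k : ℕ) (hk : 1 ≤ k) :
    (1 : Polynomial ℚ) +
      ∑ p ∈ (Finset.range (2 * k + 1)).filter (fun p => 2 ≤ p ∧ Even p),
        X ^ (p * (p + 1) / 2) *
          ∑ m ∈ Finset.range (2 * k - p + 1),
            ∑ a ∈ (Finset.Nat.antidiagonalTuple (p / 2) m).filter
                (fun a => ∀ i, Even (a i)),
              X ^ (∑ i : Fin (p / 2), 2 * ((i : ℕ) + 1) * a i) =
    ∏ j ∈ Finset.range k, (1 + X ^ (4 * (j + 1) - 1)) :=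
  sp_exterior_symmetric_square_hilbert_general k
end

section
/- For every k ≥ 1: Σ over odd p with 1 ≤ p ≤ 2k−1, of t^{p(p+1)/2} · Σ_{a_1+⋯+a_{(p+1)/2} = 2k−p−1, all a_i even} t^{a_1+3a_2+⋯+p·a_{(p+1)/2}}, equals t^{2k−1} · (1 + Σ over even p with 2 ≤ p ≤ 2k−1, of t^{p(p+1)/2} · Σ_{a_1+⋯+a_{p/2} ≤ 2k−p−1, all a_i even} t^{2a_1+4a_2+⋯+p·a_{p/2}}). -/
/-!
Write an odd `p` as `2j + 1`. In a tuple `(a₀, …, a_j)` of even numbers summing to `2k - p - 1`,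
the first entry `a₀` is determined by the others, and eliminating it turns the weight
`a₀ + 3a₁ + ⋯ + p·a_j` into `(2k - p - 1) + 2a₁ + 4a₂ + ⋯ + 2j·a_j`, where `(a₁, …, a_j)` now
only has to satisfy `a₁ + ⋯ + a_j ≤ 2k - p - 1`. Since `p(p+1)/2 + (2k - p - 1) = 2k - 1 + j(2j+1)`,
the summand for `p = 2j + 1` is `t^{2k-1}` times the summand for the even index `2j`, and the
even index `0` contributes the `1`.
-/

open Polynomial Finset Finset.Nat

def evenAntidiagonalTuple (j n : ℕ) : Finset (Fin j → ℕ) :=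
  (antidiagonalTuple j n).filter fun a => ∀ i, Even (a i)

theorem mem_evenAntidiagonalTuple {j n : ℕ} {a : Fin j → ℕ} :
    a ∈ evenAntidiagonalTuple j n ↔ ∑ i, a i = n ∧ ∀ i, Even (a i) := by
  rw [evenAntidiagonalTuple, mem_filter, mem_antidiagonalTuple]

theorem evenAntidiagonalTuple_eq_empty_of_odd {j n : ℕ} (hn : Odd n) :
    evenAntidiagonalTuple j n = ∅ := by
  refine eq_empty_of_forall_notMem fun a ha => ?_
  obtain ⟨hsum, heven⟩ := mem_evenAntidiagonalTuple.1 ha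
  exact Nat.not_even_iff_odd.2 hn (hsum ▸ even_sum _ fun i _ => heven i)

theorem sum_evenAntidiagonalTuple_succ {M : Type*} [AddCommMonoid M] {j n : ℕ} (hn : Even n)
    (g : (Fin (j + 1) → ℕ) → M) :
    ∑ c ∈ evenAntidiagonalTuple (j + 1) n, g c =
      ∑ m ∈ range (n + 1), ∑ d ∈ evenAntidiagonalTuple j m, g (Fin.cons (n - m) d) := by
  rw [sum_sigma']
  refine (sum_nbij' (fun x : (_ : ℕ) × (Fin j → ℕ) => Fin.cons (n - x.1) x.2)
    (fun c : Fin (j + 1) → ℕ => ⟨n - c 0, Fin.tail c⟩) ?_ ?_ ?_ ?_ fun _ _ => rfl).symm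
  · rintro ⟨m, d⟩ hx
    simp only [mem_sigma, mem_range, mem_evenAntidiagonalTuple] at hx ⊢
    obtain ⟨hm, hsum, heven⟩ := hx
    have hm_even : Even m := hsum ▸ even_sum _ fun i _ => heven i
    refine ⟨?_, Fin.cases ?_ fun i => ?_⟩
    · rw [Fin.sum_univ_succ, Fin.cons_zero]
      simp only [Fin.cons_succ, hsum]
      omega
    · simpa using Nat.even_sub (by omega) |>.2 (iff_of_true hn hm_even)
    · simpa using heven i
  · intro c hc
    simp only [mem_sigma, mem_range, mem_evenAntidiagonalTuple, Fin.sum_univ_succ] at hc ⊢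
    exact ⟨by omega, by simp only [Fin.tail]; omega, fun i => hc.2 i.succ⟩
  · rintro ⟨m, d⟩ hx
    simp only [mem_sigma, mem_range] at hx
    simp only [Fin.cons_zero, Fin.tail_cons, Nat.sub_sub_self (Nat.lt_succ_iff.1 hx.1)]
  · intro c hc
    simp only [mem_evenAntidiagonalTuple, Fin.sum_univ_succ] at hc
    simp only [Nat.sub_sub_self (show c 0 ≤ n by omega), Fin.cons_self_tail]

theorem sum_odd_mul_cons {j : ℕ} (x : ℕ) (d : Fin j → ℕ) :
    ∑ i : Fin (j + 1), (2 * (i : ℕ) + 1) * Fin.cons (α := fun _ => ℕ) x d i =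
      x + ∑ i : Fin j, 2 * ((i : ℕ) + 1) * d i + ∑ i, d i := by
  rw [Fin.sum_univ_succ, add_assoc, ← sum_add_distrib]
  simp only [Fin.cons_zero, Fin.cons_succ, Fin.val_succ, Fin.val_zero]
  congr 1
  · ring
  · exact sum_congr rfl fun i _ => by ring

theorem sum_evenAntidiagonalTuple_succ_pow {R : Type*} [CommSemiring R] (x : R) (j s : ℕ) :
    ∑ a ∈ evenAntidiagonalTuple (j + 1) (2 * s),
        x ^ (∑ i : Fin (j + 1), (2 * (i : ℕ) + 1) * a i) =
      x ^ (2 * s) * ∑ m ∈ range (2 * s + 2), ∑ d ∈ evenAntidiagonalTuple j m,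
        x ^ (∑ i : Fin j, 2 * ((i : ℕ) + 1) * d i) := by
  rw [sum_evenAntidiagonalTuple_succ (even_two_mul s), sum_range_succ _ (2 * s + 1),
    evenAntidiagonalTuple_eq_empty_of_odd (odd_two_mul_add_one s), sum_empty, add_zero, mul_sum]
  refine sum_congr rfl fun m hm => ?_
  rw [mul_sum]
  refine sum_congr rfl fun d hd => ?_
  rw [sum_odd_mul_cons, ← pow_add, (mem_evenAntidiagonalTuple.1 hd).1]
  congr 1
  have := mem_range.1 hm
  omega

theorem sum_filter_odd_range_two_mul {M : Type*} [AddCommMonoid M] (n : ℕ) (f : ℕ → M) :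
    ∑ p ∈ (range (2 * n)).filter Odd, f p = ∑ j ∈ range n, f (2 * j + 1) := by
  rw [sum_filter]
  induction n with
  | zero => simp
  | succ n ih =>
    rw [mul_add, mul_one, sum_range_succ, sum_range_succ, ih, sum_range_succ,
      if_neg (Nat.not_odd_iff_even.2 (even_two_mul n)), if_pos (odd_two_mul_add_one n), add_zero]

theorem sum_filter_even_range_two_mul {M : Type*} [AddCommMonoid M] (n : ℕ) (f : ℕ → M) :
    ∑ p ∈ (range (2 * n)).filter Even, f p = ∑ j ∈ range n, f (2 * j) := by
  rw [sum_filter]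
  induction n with
  | zero => simp
  | succ n ih =>
    rw [mul_add, mul_one, sum_range_succ, sum_range_succ, ih, sum_range_succ,
      if_pos (even_two_mul n), if_neg (Nat.not_even_iff_odd.2 (odd_two_mul_add_one n)), add_zero]

noncomputable def oddSummand (k p : ℕ) : ℚ[X] :=
  X ^ (p * (p + 1) / 2) *
    ∑ a ∈ evenAntidiagonalTuple ((p + 1) / 2) (2 * k - p - 1),
      X ^ (∑ i : Fin ((p + 1) / 2), (2 * (i : ℕ) + 1) * a i)

noncomputable def evenSummand (k p : ℕ) : ℚ[X] :=
  X ^ (p * (p + 1) / 2) *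
    ∑ m ∈ range (2 * k - p), ∑ a ∈ evenAntidiagonalTuple (p / 2) m,
      X ^ (∑ i : Fin (p / 2), 2 * ((i : ℕ) + 1) * a i)

theorem evenSummand_zero {k : ℕ} (hk : 1 ≤ k) : evenSummand k 0 = 1 := by
  rw [evenSummand, sum_eq_single_of_mem 0 (mem_range.2 (by omega))]
  · simp [evenAntidiagonalTuple, antidiagonalTuple_zero_zero]
  · rintro (_ | m) _ hm
    · exact absurd rfl hm
    · simp [evenAntidiagonalTuple, antidiagonalTuple_zero_succ]

theorem oddSummand_two_mul_add_one {k j : ℕ} (hj : j < k) :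
    oddSummand k (2 * j + 1) = X ^ (2 * k - 1) * evenSummand k (2 * j) := by
  obtain ⟨s, rfl⟩ : ∃ s, k = j + 1 + s := ⟨k - j - 1, by omega⟩
  have hlen : (2 * j + 1 + 1) / 2 = j + 1 := by omega
  have hrest : 2 * (j + 1 + s) - (2 * j + 1) - 1 = 2 * s := by omega
  have hodd : (2 * j + 1) * (2 * j + 1 + 1) / 2 = (2 * j + 1) * (j + 1) := by
    rw [show (2 * j + 1) * (2 * j + 1 + 1) = 2 * ((2 * j + 1) * (j + 1)) by ring]; omega
  have heven : 2 * j * (2 * j + 1) / 2 = j * (2 * j + 1) := by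
    rw [mul_assoc]; omega
  rw [oddSummand, evenSummand, hlen, hrest, sum_evenAntidiagonalTuple_succ_pow, hodd, heven,
    show 2 * j / 2 = j by omega, show 2 * (j + 1 + s) - 2 * j = 2 * s + 2 by omega,
    ← mul_assoc, ← mul_assoc, ← pow_add, ← pow_add,
    show 2 * (j + 1 + s) - 1 = 2 * j + 2 * s + 1 by omega]
  ring_nf

/-- for every `k ≥ 1`,
`Σ_{p odd, 1 ≤ p ≤ 2k−1} t^{p(p+1)/2} Σ_{a₁+⋯+a_{(p+1)/2} = 2k−p−1, aᵢ even} t^{a₁+3a₂+⋯+p·a_{(p+1)/2}}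
 = t^{2k−1} (1 + Σ_{p even, 2 ≤ p ≤ 2k−1} t^{p(p+1)/2} Σ_{a₁+⋯+a_{p/2} ≤ 2k−p−1, aᵢ even} t^{2a₁+4a₂+⋯+p·a_{p/2}})`. -/
theorem so_exterior_exterior_square_identity (k : ℕ) (hk : 1 ≤ k) :
    (∑ p ∈ (Finset.range (2 * k)).filter (fun p => 1 ≤ p ∧ Odd p),
      X ^ (p * (p + 1) / 2) *
        ∑ a ∈ (Finset.Nat.antidiagonalTuple ((p + 1) / 2) (2 * k - p - 1)).filter
            (fun a => ∀ i, Even (a i)),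
          X ^ (∑ i : Fin ((p + 1) / 2), (2 * (i : ℕ) + 1) * a i) : Polynomial ℚ) =
    X ^ (2 * k - 1) *
      (1 + ∑ p ∈ (Finset.range (2 * k)).filter (fun p => 2 ≤ p ∧ Even p),
        X ^ (p * (p + 1) / 2) *
          ∑ m ∈ Finset.range (2 * k - p),
            ∑ a ∈ (Finset.Nat.antidiagonalTuple (p / 2) m).filter
                (fun a => ∀ i, Even (a i)),
              X ^ (∑ i : Fin (p / 2), 2 * ((i : ℕ) + 1) * a i)) := by
  change ∑ p ∈ _, oddSummand k p = X ^ (2 * k - 1) * (1 + ∑ p ∈ _, evenSummand k p)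
  have hodd : (range (2 * k)).filter (fun p => 1 ≤ p ∧ Odd p) = (range (2 * k)).filter Odd :=
    filter_congr fun p _ => and_iff_right_of_imp fun hp => hp.pos
  have heven : (range (2 * k)).filter (fun p => 2 ≤ p ∧ Even p) =
      ((range (2 * k)).filter Even).erase 0 := by
    ext p
    simp only [mem_filter, mem_erase, mem_range, Nat.even_iff]
    omega
  rw [hodd, heven, ← evenSummand_zero hk,
    add_sum_erase _ _ (mem_filter.2 ⟨mem_range.2 (by omega), Even.zero⟩),
    sum_filter_odd_range_two_mul, sum_filter_even_range_two_mul, mul_sum]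
  exact sum_congr rfl fun j hj => oddSummand_two_mul_add_one (mem_range.1 hj)
end

section
/- For n = 2k, the generating function over partitions λ with at most n parts satisfying λ_{2i−1} = λ_{2i} for all i ≤ k and such that λ is even (all λ_i even) or λ is odd (all λ_i odd) is Σ_{λ: λ_{2i−1}=λ_{2i} ∀i, λ even or λ odd} t^{|λ|/2} = (1/(1−t^k)) Π_{i=1}^{k−1} 1/(1−t^{2i}). -/
open PowerSeries Finset

noncomputable section SO17Aux

namespace SO17Aux

lemma geom_inv (n : ℕ) (hn : 1 ≤ n) :
    ((1 : PowerSeries ℚ) - X ^ n)⁻¹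
      = PowerSeries.mk fun m => if n ∣ m then (1:ℚ) else 0 := by
  rw [PowerSeries.inv_eq_iff_mul_eq_one]
  · ext j
    rw [mul_sub, mul_one, map_sub, PowerSeries.coeff_mul_X_pow']
    simp only [coeff_mk, coeff_one]
    rcases eq_or_ne j 0 with rfl | hj
    · rw [if_pos (dvd_zero n), if_neg (by omega : ¬ n ≤ 0), if_pos rfl]; ring
    · rw [if_neg hj]
      rcases le_or_gt n j with hle | hlt
      · have hiff : n ∣ j ↔ n ∣ j - n := by
          constructor
          · intro h; exact (Nat.dvd_sub h dvd_rfl)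
          · intro h; have := Nat.dvd_add h (dvd_refl n); rwa [Nat.sub_add_cancel hle] at this
        rw [if_pos hle]
        by_cases h : n ∣ j
        · rw [if_pos h, if_pos (hiff.mp h)]; ring
        · rw [if_neg h, if_neg (fun hh => h (hiff.mpr hh))]; ring
      · rw [if_neg (by omega : ¬ n ≤ j),
          if_neg (fun h => by have := Nat.le_of_dvd (by omega) h; omega)]
        ring
  · have h0 : (constantCoeff (R := ℚ)) (X ^ n : PowerSeries ℚ) = 0 := by
      rw [map_pow, constantCoeff_X, zero_pow (by omega)]
    rw [map_sub, map_one, h0]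
    norm_num


def sols (w : ℕ → ℕ) (r m : ℕ) : Finset (Fin r → ℕ) :=
  (Fintype.piFinset fun _ => Finset.range (m+1)).filter fun f => ∑ i, w i.val * f i = m

lemma mem_sols {w : ℕ → ℕ} (hw : ∀ i, 1 ≤ w i) {r m : ℕ} (f : Fin r → ℕ) :
    f ∈ sols w r m ↔ ∑ i, w i.val * f i = m := by
  unfold sols
  rw [Finset.mem_filter]
  constructor
  · exact fun h => h.2
  · intro h
    refine ⟨?_, h⟩
    rw [Fintype.mem_piFinset]
    intro i
    rw [Finset.mem_range]
    have h1 : w i.val * f i ≤ m := by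
      rw [← h]
      exact Finset.single_le_sum (f := fun j : Fin r => w j.val * f j) (fun j _ => Nat.zero_le _) (Finset.mem_univ i)
    have h2 : f i ≤ w i.val * f i := Nat.le_mul_of_pos_left _ (hw i.val)
    omega

lemma sols_zero (w : ℕ → ℕ) (m : ℕ) :
    (sols w 0 m).card = if m = 0 then 1 else 0 := by
  rcases eq_or_ne m 0 with rfl | hm
  · rw [if_pos rfl]
    rw [Finset.card_eq_one]
    refine ⟨fun i => 0, ?_⟩
    ext f
    simp only [Finset.mem_singleton]
    constructor
    · intro _; ext i; exact absurd i.isLt (by omega)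
    · intro h; subst h
      unfold sols
      simp
      funext i; exact i.elim0
  · rw [if_neg hm, Finset.card_eq_zero]
    ext f
    unfold sols
    simp only [Finset.mem_filter, Finset.notMem_empty, iff_false, not_and]
    intro _
    simp only [Finset.univ_eq_empty, Finset.sum_empty]
    omega

lemma sols_succ_lt {w : ℕ → ℕ} (hw : ∀ i, 1 ≤ w i) {r m : ℕ} (hm : m < w r) :
    (sols w (r+1) m).card = (sols w r m).card := by
  apply Finset.card_nbij' (fun f => Fin.init f) (fun g => Fin.snoc g 0)
  · intro f hf
    rw [Finset.mem_coe, mem_sols hw] at hf ⊢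
    rw [Fin.sum_univ_castSucc] at hf
    have hlast : f (Fin.last r) = 0 := by
      by_contra h
      have h1 : w r ≤ w (Fin.last r).val * f (Fin.last r) := by
        have : 1 ≤ f (Fin.last r) := by omega
        calc w r = w r * 1 := by ring
        _ ≤ w (Fin.last r).val * f (Fin.last r) := by
            apply Nat.mul_le_mul _ this
            simp [Fin.val_last]
      have h2 : w (Fin.last r).val * f (Fin.last r) ≤ m := by
        rw [← hf]; exact Nat.le_add_left _ _
      omega
    rw [hlast, Nat.mul_zero, Nat.add_zero] at hf
    rw [← hf]
    apply Finset.sum_congr rfl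
    intro i _
    simp [Fin.init, Fin.coe_castSucc]
  · intro g hg
    rw [Finset.mem_coe, mem_sols hw] at hg ⊢
    rw [Fin.sum_univ_castSucc]
    simp only [Fin.snoc_last, Fin.snoc_castSucc, Nat.mul_zero, Nat.add_zero]
    rw [← hg]
    apply Finset.sum_congr rfl
    intro i _
    simp [Fin.coe_castSucc]
  · intro f hf
    rw [Finset.mem_coe, mem_sols hw] at hf
    have hlast : f (Fin.last r) = 0 := by
      by_contra h
      rw [Fin.sum_univ_castSucc] at hf
      have h1 : w r ≤ w (Fin.last r).val * f (Fin.last r) := by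
        have h1' : 1 ≤ f (Fin.last r) := by omega
        calc w r = w r * 1 := by ring
        _ ≤ w (Fin.last r).val * f (Fin.last r) := by
            apply Nat.mul_le_mul _ h1'
            simp [Fin.val_last]
      have h2 : w (Fin.last r).val * f (Fin.last r) ≤ m := by
        rw [← hf]; exact Nat.le_add_left _ _
      omega
    rw [← hlast]
    exact Fin.snoc_init_self f
  · intro g hg
    simp


lemma sols_succ_ge {w : ℕ → ℕ} (hw : ∀ i, 1 ≤ w i) {r m : ℕ} (hm : w r ≤ m) :
    (sols w (r+1) m).card
      = (sols w r m).card + (sols w (r+1) (m - w r)).card := by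
  classical
  rw [← Finset.card_filter_add_card_filter_not
    (p := fun f => f (Fin.last r) = 0) (s := sols w (r+1) m)]
  congr 1
  · -- zero-last part ↔ sols w r m
    apply Finset.card_nbij' (fun f => Fin.init f) (fun g => Fin.snoc g 0)
    · intro f hf
      rw [Finset.mem_coe, Finset.mem_filter, mem_sols hw] at hf
      obtain ⟨hsum, hlast⟩ := hf
      rw [Finset.mem_coe, mem_sols hw]
      rw [Fin.sum_univ_castSucc, hlast, Nat.mul_zero, Nat.add_zero] at hsum
      rw [← hsum]
      exact Finset.sum_congr rfl fun i _ => by simp [Fin.init]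
    · intro g hg
      rw [Finset.mem_coe, mem_sols hw] at hg
      rw [Finset.mem_coe, Finset.mem_filter, mem_sols hw]
      constructor
      · rw [Fin.sum_univ_castSucc]
        simp only [Fin.snoc_last, Fin.snoc_castSucc, Nat.mul_zero, Nat.add_zero]
        rw [← hg]
        exact Finset.sum_congr rfl fun i _ => by simp
      · simp
    · intro f hf
      rw [Finset.mem_coe, Finset.mem_filter] at hf
      rw [← hf.2]
      exact Fin.snoc_init_self f
    · intro g hg
      simp
  · -- positive-last part ↔ sols w (r+1) (m - w r)
    apply Finset.card_nbij' (fun f => Function.update f (Fin.last r) (f (Fin.last r) - 1))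
      (fun g => Function.update g (Fin.last r) (g (Fin.last r) + 1))
    · intro f hf
      rw [Finset.mem_coe, Finset.mem_filter, mem_sols hw] at hf
      obtain ⟨hsum, hlast⟩ := hf
      rw [Finset.mem_coe, mem_sols hw]
      rw [Fin.sum_univ_castSucc] at hsum ⊢
      have e1 : ∀ i : Fin r, Function.update f (Fin.last r) (f (Fin.last r) - 1) i.castSucc
          = f i.castSucc := fun i =>
        Function.update_of_ne (Fin.castSucc_lt_last i).ne _ f
      simp only [e1, Function.update_self]
      have hfl : 1 ≤ f (Fin.last r) := by omega
      have expand : w (Fin.last r).val * f (Fin.last r)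
          = w (Fin.last r).val * (f (Fin.last r) - 1) + w r := by
        rw [Fin.val_last]
        cases' Nat.exists_eq_add_of_le hfl with c hc
        rw [hc, Nat.add_sub_cancel_left]
        ring
      omega
    · intro g hg
      rw [Finset.mem_coe, mem_sols hw] at hg
      rw [Finset.mem_coe, Finset.mem_filter, mem_sols hw]
      have e1 : ∀ i : Fin r, Function.update g (Fin.last r) (g (Fin.last r) + 1) i.castSucc
          = g i.castSucc := fun i =>
        Function.update_of_ne (Fin.castSucc_lt_last i).ne _ g
      constructor
      · rw [Fin.sum_univ_castSucc] at hg ⊢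
        simp only [e1, Function.update_self]
        have : w (Fin.last r).val * (g (Fin.last r) + 1)
            = w (Fin.last r).val * g (Fin.last r) + w r := by
          rw [Fin.val_last]; ring
        omega
      · simp
    · intro f hf
      rw [Finset.mem_coe, Finset.mem_filter] at hf
      have hfl : f (Fin.last r) ≠ 0 := hf.2
      funext j
      rcases eq_or_ne j (Fin.last r) with rfl | hj
      · simp only [Function.update_self]
        omega
      · beta_reduce; rw [Function.update_of_ne hj, Function.update_of_ne hj]
    · intro g hg
      funext j
      rcases eq_or_ne j (Fin.last r) with rfl | hj
      · simp only [Function.update_self]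
        omega
      · beta_reduce; rw [Function.update_of_ne hj, Function.update_of_ne hj]


lemma constCoeff_one_sub_X_pow (n : ℕ) (hn : 1 ≤ n) :
    constantCoeff (R := ℚ) ((1 : PowerSeries ℚ) - X ^ n) ≠ 0 := by
  have h0 : (constantCoeff (R := ℚ)) (X ^ n : PowerSeries ℚ) = 0 := by
    rw [map_pow, constantCoeff_X, zero_pow (by omega)]
  rw [map_sub, map_one, h0]
  norm_num

lemma coeff_prod_geom (w : ℕ → ℕ) (hw : ∀ i, 1 ≤ w i) (r : ℕ) : ∀ m : ℕ,
    PowerSeries.coeff (R := ℚ) m (∏ i ∈ Finset.range r, ((1 : PowerSeries ℚ) - X ^ (w i))⁻¹)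
      = (sols w r m).card := by
  induction r with
  | zero =>
    intro m
    rw [Finset.prod_range_zero, sols_zero, PowerSeries.coeff_one]
    split_ifs <;> norm_num
  | succ r IH =>
    have key : (∏ i ∈ Finset.range (r+1), ((1 : PowerSeries ℚ) - X ^ (w i))⁻¹)
        = (∏ i ∈ Finset.range r, ((1 : PowerSeries ℚ) - X ^ (w i))⁻¹)
          + (∏ i ∈ Finset.range (r+1), ((1 : PowerSeries ℚ) - X ^ (w i))⁻¹) * X ^ (w r) := by
      have hA : (∏ i ∈ Finset.range (r+1), ((1 : PowerSeries ℚ) - X ^ (w i))⁻¹)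
          * ((1 : PowerSeries ℚ) - X ^ (w r))
          = ∏ i ∈ Finset.range r, ((1 : PowerSeries ℚ) - X ^ (w i))⁻¹ := by
        rw [Finset.prod_range_succ, mul_assoc,
          PowerSeries.inv_mul_cancel _ (constCoeff_one_sub_X_pow (w r) (hw r)), mul_one]
      rw [mul_sub, mul_one] at hA
      linear_combination hA

    intro m
    induction m using Nat.strong_induction_on with
    | _ m ih =>
      rw [key, map_add, PowerSeries.coeff_mul_X_pow']
      rcases lt_or_ge m (w r) with h | h
      · rw [if_neg (not_le.mpr h), IH, sols_succ_lt hw h, add_zero]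
      · rw [if_pos h, IH, ih (m - w r) (by have := hw r; omega), sols_succ_ge hw h]
        push_cast
        ring


lemma half_sum (g : ℕ → ℕ) (n : ℕ) :
    ∑ j ∈ Finset.range (2*n), g (j/2) = 2 * ∑ j ∈ Finset.range n, g j := by
  induction n with
  | zero => simp
  | succ n IH =>
    have h2 : 2*(n+1) = (2*n+1)+1 := by ring
    rw [h2, Finset.sum_range_succ, Finset.sum_range_succ, Finset.sum_range_succ, IH]
    have e1 : (2*n+1)/2 = n := by omega
    have e2 : (2*n)/2 = n := by omega
    rw [e1, e2]
    ring

lemma sumIco (g : ℕ → ℕ) (n : ℕ) :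
    ∑ j ∈ Finset.range n, ∑ i ∈ Finset.Ico (j+1) n, g i
      = ∑ i ∈ Finset.range n, i * g i := by
  induction n with
  | zero => simp
  | succ n IH =>
    rw [Finset.sum_range_succ, Finset.sum_range_succ]
    rw [Finset.Ico_self, Finset.sum_empty, add_zero]
    have e : ∀ j ∈ Finset.range n, ∑ i ∈ Finset.Ico (j+1) (n+1), g i
        = ∑ i ∈ Finset.Ico (j+1) n, g i + g n := by
      intro j hj
      rw [Finset.mem_range] at hj
      rw [Finset.sum_Ico_succ_top (by omega)]
    rw [Finset.sum_congr rfl e, Finset.sum_add_distrib, IH, Finset.sum_const,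
      Finset.card_range, smul_eq_mul]

lemma abel_sum (g : ℕ → ℕ) (hg : ∀ i, g (i+1) ≤ g i) (n : ℕ) :
    (n+1) * g n + ∑ i ∈ Finset.range (n+1), i * (g (i-1) - g i)
      = ∑ i ∈ Finset.range (n+1), g i := by
  induction n with
  | zero => simp
  | succ n IH =>
    rw [Finset.sum_range_succ (fun i => i * (g (i-1) - g i)), Finset.sum_range_succ g]
    have e1 : (n+1) - 1 = n := by omega
    simp only [e1]
    cases' Nat.exists_eq_add_of_le (hg n) with c hc
    rw [hc] at IH ⊢
    rw [Nat.add_sub_cancel_left, ← IH]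
    ring


def wt (k : ℕ) : ℕ → ℕ := fun i => if i = 0 then k else 2*i

def Fx {k : ℕ} (f : Fin k → ℕ) : ℕ → ℕ := fun i => if h : i < k then f ⟨i,h⟩ else 0

def mu {k : ℕ} (f : Fin k → ℕ) : ℕ → ℕ :=
  fun j => Fx f 0 + 2 * ∑ i ∈ Finset.Ico (j+1) k, Fx f i

def Phi {k : ℕ} (f : Fin k → ℕ) : Fin (2*k) → ℕ := fun j => mu f (j.val / 2)

def gl {k : ℕ} (lam : Fin (2*k) → ℕ) : ℕ → ℕ :=
  fun i => if h : min (2*i) (2*k-1) < 2*k then lam ⟨min (2*i) (2*k-1), h⟩ else 0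

def Psi {k : ℕ} (lam : Fin (2*k) → ℕ) : Fin k → ℕ :=
  fun i => if i.val = 0 then gl lam (k-1) else (gl lam (i.val - 1) - gl lam i.val) / 2

lemma wt_pos {k : ℕ} (hk : 1 ≤ k) : ∀ i, 1 ≤ wt k i := by
  intro i; unfold wt; split_ifs <;> omega

lemma mu_anti {k : ℕ} (f : Fin k → ℕ) : ∀ a b : ℕ, a ≤ b → mu f b ≤ mu f a := by
  intro a b hab
  unfold mu
  have : ∑ i ∈ Finset.Ico (b+1) k, Fx f i ≤ ∑ i ∈ Finset.Ico (a+1) k, Fx f i :=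
    Finset.sum_le_sum_of_subset (Finset.Ico_subset_Ico (by omega) le_rfl)
  omega

-- weighted sum in range form
lemma weight_sum_range {k : ℕ} (hk : 1 ≤ k) (f : Fin k → ℕ) :
    ∑ i : Fin k, wt k i.val * f i
      = k * Fx f 0 + 2 * ∑ i ∈ Finset.range k, i * Fx f i := by
  have e0 : ∑ i : Fin k, wt k i.val * f i
      = ∑ i ∈ Finset.range k, wt k i * Fx f i := by
    rw [← Fin.sum_univ_eq_sum_range (fun i => wt k i * Fx f i) k]
    apply Finset.sum_congr rfl
    intro i _
    unfold Fx
    rw [dif_pos i.isLt]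
  rw [e0]
  obtain ⟨k', rfl⟩ : ∃ k', k = k' + 1 := ⟨k - 1, by omega⟩
  have e1 : ∀ i ∈ Finset.range k', wt (k'+1) (i+1) * Fx f (i+1) = 2*(i+1) * Fx f (i+1) := by
    intro i _
    unfold wt
    rw [if_neg (by omega)]
  have e2 : wt (k'+1) 0 = k' + 1 := by unfold wt; simp
  rw [Finset.sum_range_succ' (fun i => wt (k'+1) i * Fx f i) k',
    Finset.sum_range_succ' (fun i => i * Fx f i) k', Finset.sum_congr rfl e1, e2,
    Nat.mul_add, Finset.mul_sum]
  simp only [Nat.zero_mul, Nat.mul_zero, Nat.add_zero]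
  have e3 : ∑ i ∈ Finset.range k', 2*((i+1) * Fx f (i+1))
      = ∑ i ∈ Finset.range k', 2*(i+1) * Fx f (i+1) :=
    Finset.sum_congr rfl fun i _ => by ring
  rw [e3]
  ring

lemma Phi_sum {k : ℕ} (hk : 1 ≤ k) (f : Fin k → ℕ) {m : ℕ}
    (hf : ∑ i : Fin k, wt k i.val * f i = m) :
    ∑ j : Fin (2*k), Phi f j = 2 * m := by
  have e0 : ∑ j : Fin (2*k), Phi f j = ∑ j ∈ Finset.range (2*k), mu f (j/2) := by
    rw [← Fin.sum_univ_eq_sum_range (fun j => mu f (j/2)) (2*k)]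
    rfl
  rw [e0, half_sum (mu f) k]
  have e1 : ∑ j ∈ Finset.range k, mu f j
      = k * Fx f 0 + 2 * ∑ i ∈ Finset.range k, i * Fx f i := by
    unfold mu
    rw [Finset.sum_add_distrib, Finset.sum_const, Finset.card_range, smul_eq_mul,
      ← Finset.mul_sum, sumIco (Fx f) k]
  rw [e1, ← weight_sum_range hk f, hf]

lemma Phi_anti {k : ℕ} (f : Fin k → ℕ) : Antitone (Phi f) := by
  intro a b hab
  exact mu_anti f _ _ (Nat.div_le_div_right (by exact_mod_cast hab))

lemma Phi_pair {k : ℕ} (f : Fin k → ℕ) :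
    ∀ i : ℕ, ∀ h : 2 * i + 1 < 2 * k,
      Phi f ⟨2 * i, (by omega : 2 * i + 0 < 2 * k)⟩ = Phi f ⟨2 * i + 1, h⟩ := by
  intro i h
  unfold Phi
  simp only
  congr 1
  omega

lemma Phi_parity {k : ℕ} (f : Fin k → ℕ) :
    (∀ j, Even (Phi f j)) ∨ (∀ j, Odd (Phi f j)) := by
  rcases Nat.even_or_odd (Fx f 0) with he | ho
  · left
    intro j
    unfold Phi mu
    exact he.add (even_two_mul _)
  · right
    intro j
    unfold Phi mu
    exact ho.add_even (even_two_mul _)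


lemma gl_eq {k : ℕ} (hk : 1 ≤ k) (lam : Fin (2*k) → ℕ) (i : ℕ) :
    gl lam i = lam ⟨min (2*i) (2*k-1), by omega⟩ := by
  unfold gl
  rw [dif_pos (show min (2*i) (2*k-1) < 2*k by omega)]

lemma gl_anti {k : ℕ} (hk : 1 ≤ k) (lam : Fin (2*k) → ℕ) (hA : Antitone lam) :
    ∀ i, gl lam (i+1) ≤ gl lam i := by
  intro i
  rw [gl_eq hk lam i, gl_eq hk lam (i+1)]
  apply hA
  rw [Fin.le_def]
  simp only
  omega

lemma lam_eq_gl {k : ℕ} (hk : 1 ≤ k) (lam : Fin (2*k) → ℕ)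
    (hP : ∀ i : ℕ, ∀ h : 2 * i + 1 < 2 * k,
      lam ⟨2 * i, (by omega : 2 * i + 0 < 2 * k)⟩ = lam ⟨2 * i + 1, h⟩) :
    ∀ j (h : j < 2*k), lam ⟨j, h⟩ = gl lam (j/2) := by
  intro j h
  rw [gl_eq hk lam (j/2)]
  rcases Nat.even_or_odd j with ⟨i, hi⟩ | ⟨i, hi⟩
  · congr 1
    apply Fin.ext
    simp only
    omega
  · subst hi
    have := hP i (by omega)
    rw [← this]
    congr 1
    apply Fin.ext
    simp only
    omega

lemma gl_parity {k : ℕ} (hk : 1 ≤ k) (lam : Fin (2*k) → ℕ)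
    (hpar : (∀ i, Even (lam i)) ∨ (∀ i, Odd (lam i))) :
    ∀ i j, Even (gl lam i) ↔ Even (gl lam j) := by
  intro i j
  rw [gl_eq hk lam i, gl_eq hk lam j]
  rcases hpar with h | h
  · simp [h _, h _]
  · simp [Nat.not_even_iff_odd.mpr (h _), Nat.not_even_iff_odd.mpr (h _)]

lemma two_mul_psi {k : ℕ} (hk : 1 ≤ k) (lam : Fin (2*k) → ℕ) (hA : Antitone lam)
    (hpar : (∀ i, Even (lam i)) ∨ (∀ i, Odd (lam i))) (i : ℕ) :
    2 * ((gl lam (i-1) - gl lam i) / 2) = gl lam (i-1) - gl lam i := by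
  rcases Nat.eq_zero_or_pos i with rfl | hi
  · simp
  · have hle : gl lam i ≤ gl lam (i-1) := by
      have := gl_anti hk lam hA (i-1)
      have hi1 : i - 1 + 1 = i := by omega
      rwa [hi1] at this
    have heven : Even (gl lam (i-1) - gl lam i) :=
      (Nat.even_sub hle).mpr (gl_parity hk lam hpar (i-1) i)
    obtain ⟨c, hc⟩ := heven
    omega


lemma Fx_psi_zero {k : ℕ} (hk : 1 ≤ k) (lam : Fin (2*k) → ℕ) :
    Fx (Psi lam) 0 = gl lam (k-1) := by
  unfold Fx Psi
  rw [dif_pos (by omega : (0:ℕ) < k)]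
  simp

lemma Fx_psi_pos {k : ℕ} (lam : Fin (2*k) → ℕ) {i : ℕ} (hik : i < k) (hi : i ≠ 0) :
    Fx (Psi lam) i = (gl lam (i-1) - gl lam i) / 2 := by
  unfold Fx Psi
  rw [dif_pos hik]
  simp only
  rw [if_neg hi]

lemma Psi_sum {k : ℕ} (hk : 1 ≤ k) (lam : Fin (2*k) → ℕ) (hA : Antitone lam)
    (hP : ∀ i : ℕ, ∀ h : 2 * i + 1 < 2 * k,
      lam ⟨2 * i, (by omega : 2 * i + 0 < 2 * k)⟩ = lam ⟨2 * i + 1, h⟩)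
    (hpar : (∀ i, Even (lam i)) ∨ (∀ i, Odd (lam i))) {m : ℕ}
    (hsum : ∑ j, lam j = 2 * m) :
    ∑ i : Fin k, wt k i.val * Psi lam i = m := by
  rw [weight_sum_range hk]
  have e : ∀ i ∈ Finset.range k, 2 * (i * Fx (Psi lam) i)
      = i * (gl lam (i-1) - gl lam i) := by
    intro i hi
    rcases eq_or_ne i 0 with rfl | h
    · simp
    · rw [Fx_psi_pos lam (Finset.mem_range.mp hi) h]
      rw [show 2*(i * ((gl lam (i-1) - gl lam i)/2))
          = i * (2*((gl lam (i-1) - gl lam i)/2)) from by ring,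
        two_mul_psi hk lam hA hpar i]
  have e2 : 2 * ∑ i ∈ Finset.range k, i * Fx (Psi lam) i
      = ∑ i ∈ Finset.range k, i * (gl lam (i-1) - gl lam i) := by
    rw [Finset.mul_sum]
    exact Finset.sum_congr rfl e
  have hs : ∑ j : Fin (2*k), lam j = 2 * ∑ i ∈ Finset.range k, gl lam i := by
    have e3 : ∀ j ∈ Finset.univ (α := Fin (2*k)), lam j = gl lam (j.val/2) := by
      intro j _
      have h4 := lam_eq_gl hk lam hP j.val j.isLt
      rw [← h4]
    rw [Finset.sum_congr rfl e3,
      Fin.sum_univ_eq_sum_range (fun j => gl lam (j/2)) (2*k), half_sum (gl lam) k]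
  obtain ⟨n, rfl⟩ : ∃ n, k = n+1 := ⟨k-1, by omega⟩
  rw [Fx_psi_zero hk lam, e2]
  simp only [Nat.add_sub_cancel]
  rw [abel_sum (gl lam) (gl_anti hk lam hA) n]
  omega

lemma left_inv {k : ℕ} (hk : 1 ≤ k) (f : Fin k → ℕ) : Psi (Phi f) = f := by
  have hgl : ∀ j, gl (Phi f) j = mu f (min j (k-1)) := by
    intro j
    rw [gl_eq hk]
    show mu f ((min (2*j) (2*k-1))/2) = mu f (min j (k-1))
    congr 1
    omega
  funext i
  unfold Psi
  by_cases h0 : i.val = 0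
  · rw [if_pos h0, hgl, min_self]
    unfold mu Fx
    rw [show k-1+1 = k from by omega, Finset.Ico_self, Finset.sum_empty,
      dif_pos (by omega : (0:ℕ) < k)]
    simp only [Nat.mul_zero, Nat.add_zero]
    congr 1
    exact Fin.ext h0.symm
  · rw [if_neg h0, hgl, hgl]
    have ht1 : 1 ≤ i.val := by omega
    have ht2 : i.val < k := i.isLt
    rw [show min (i.val - 1) (k-1) = i.val - 1 from by omega,
      show min i.val (k-1) = i.val from by omega]
    unfold mu
    have hsplit : ∑ x ∈ Finset.Ico (i.val-1+1) k, Fx f x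
        = Fx f i.val + ∑ x ∈ Finset.Ico (i.val+1) k, Fx f x := by
      rw [show i.val - 1 + 1 = i.val from by omega]
      exact Finset.sum_eq_sum_Ico_succ_bot ht2 (Fx f)
    rw [hsplit]
    have hfx : Fx f i.val = f i := by
      unfold Fx
      rw [dif_pos i.isLt]
    omega

lemma right_inv {k : ℕ} (hk : 1 ≤ k) (lam : Fin (2*k) → ℕ) (hA : Antitone lam)
    (hP : ∀ i : ℕ, ∀ h : 2 * i + 1 < 2 * k,
      lam ⟨2 * i, (by omega : 2 * i + 0 < 2 * k)⟩ = lam ⟨2 * i + 1, h⟩)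
    (hpar : (∀ i, Even (lam i)) ∨ (∀ i, Odd (lam i))) :
    Phi (Psi lam) = lam := by
  have key : ∀ d, mu (Psi lam) (k-1-d) = gl lam (k-1-d) := by
    intro d
    induction d with
    | zero =>
      simp only [Nat.sub_zero]
      unfold mu
      rw [show k-1+1 = k from by omega, Finset.Ico_self, Finset.sum_empty,
        Fx_psi_zero hk lam]
      omega
    | succ d IH =>
      rcases le_or_gt (k-1) d with hd | hd
      · rw [show k-1-(d+1) = k-1-d from by omega]
        exact IH
      · obtain ⟨t, ht⟩ : ∃ t, k-1-(d+1) = t := ⟨_, rfl⟩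
        have htt : t + 1 = k-1-d := by omega
        have ht1 : t + 1 < k := by omega
        rw [ht]
        unfold mu at IH ⊢
        rw [Finset.sum_eq_sum_Ico_succ_bot ht1 (Fx (Psi lam))]
        rw [← htt] at IH
        rw [Fx_psi_pos lam (i := t+1) ht1 (by omega)]
        have e1 : t+1-1 = t := by omega
        rw [e1]
        have h2 := two_mul_psi hk lam hA hpar (t+1)
        rw [e1] at h2
        have hle := gl_anti hk lam hA t
        omega
  funext j
  have hj2 : j.val / 2 ≤ k - 1 := by have := j.isLt; omega
  have h1 : Phi (Psi lam) j = mu (Psi lam) (j.val/2) := rfl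
  rw [h1, show j.val/2 = k-1-(k-1-j.val/2) from by omega, key,
    show k-1-(k-1-j.val/2) = j.val/2 from by omega,
    ← lam_eq_gl hk lam hP j.val j.isLt]


end SO17Aux
end SO17Aux

open SO17Aux in
/-- for `n = 2k`, the generating function `Σ t^{|λ|/2}` over partitions
`λ` with at most `2k` parts satisfying `λ_{2i−1} = λ_{2i}` for all `i ≤ k` which are
either even (all parts even) or odd (all parts odd) equals
`(1/(1 − t^k)) Π_{i=1}^{k−1} 1/(1 − t^{2i})`; stated coefficient-wise. -/
theorem hilbert_series_so_exterior_square_even (k : ℕ) (hk : 1 ≤ k) (m : ℕ) :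
    PowerSeries.coeff (R := ℚ) m
      (((1 : PowerSeries ℚ) - PowerSeries.X ^ k)⁻¹ *
        ∏ i ∈ Finset.range (k - 1), ((1 : PowerSeries ℚ) - PowerSeries.X ^ (2 * (i + 1)))⁻¹) =
    Nat.card {lam : Fin (2 * k) → ℕ // Antitone lam ∧
      (∀ i : ℕ, ∀ h : 2 * i + 1 < 2 * k, lam ⟨2 * i, by omega⟩ = lam ⟨2 * i + 1, h⟩) ∧
      ((∀ i, Even (lam i)) ∨ (∀ i, Odd (lam i))) ∧
      (∑ i, lam i) = 2 * m} := by
  classical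
  have hprod : (((1 : PowerSeries ℚ) - PowerSeries.X ^ k)⁻¹ *
        ∏ i ∈ Finset.range (k - 1), ((1 : PowerSeries ℚ) - PowerSeries.X ^ (2 * (i + 1)))⁻¹)
      = ∏ i ∈ Finset.range k, ((1 : PowerSeries ℚ) - PowerSeries.X ^ (wt k i))⁻¹ := by
    obtain ⟨n, rfl⟩ : ∃ n, k = n + 1 := ⟨k - 1, by omega⟩
    have hr : ∀ x : ℕ, wt (n+1) (x+1) = 2*(x+1) := fun x => by simp [wt]
    have h0 : wt (n+1) 0 = n+1 := by simp [wt]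
    rw [Finset.prod_range_succ'
      (fun i => ((1 : PowerSeries ℚ) - PowerSeries.X ^ (wt (n+1) i))⁻¹) n]
    simp only [hr, h0, Nat.add_sub_cancel]
    ring
  rw [hprod, coeff_prod_geom (wt k) (wt_pos hk) k m]
  congr 1
  rw [← Nat.card_eq_finsetCard]
  apply Nat.card_congr
  have e1 : {f // f ∈ sols (wt k) k m} ≃ {f : Fin k → ℕ // ∑ i, wt k i.val * f i = m} :=
    Equiv.subtypeEquivRight (fun f => mem_sols (wt_pos hk) f)
  refine e1.trans ?_
  exact {
    toFun := fun x => ⟨Phi x.val,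
      Phi_anti x.val, Phi_pair x.val, Phi_parity x.val, Phi_sum hk x.val x.property⟩
    invFun := fun y => ⟨Psi y.val,
      Psi_sum hk y.val y.property.1 y.property.2.1 y.property.2.2.1 y.property.2.2.2⟩
    left_inv := fun x => Subtype.ext (left_inv hk x.val)
    right_inv := fun y => Subtype.ext
      (right_inv hk y.val y.property.1 y.property.2.1 y.property.2.2.1) }
end
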